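/- arXiv:2105.06935 — 3 statements merged into one kernel-verified Lean document; each statement's English description precedes it below -/
import Mathlib

section
/- Let m ∈ ℕ with m ≥ 1, let n = 2m, and let z ∈ ℕ with 0 ≤ z < 2^n. Then Σ_{x=0}^{2^n-1} i^{w(x)} (-1)^{z·x} = (-1)^{w(z)} · i^{m+w(z)} · 2^m, where the sum is taken in ℂ. -/
open Finset

/-- Hamming weight of a natural number: number of 1s in its binary representation. -/
def hw (x : ℕ) : ℕ := (Nat.digits 2 x).sum

/-- The `j`-th bit of `z`, as a natural number in `{0,1}`. -/
def nbit (z j : ℕ) : ℕ := if z.testBit j then 1 else 0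

/-- Partial bitwise dot product `∑_{j=0}^{n-1} z_j x_j`. -/
def ndot (n z x : ℕ) : ℕ := ∑ j ∈ Finset.range n, nbit z j * nbit x j

/-!
Expanding the product `∏_{j<n} (1 + a·(-1)^{z_j})` over the bits of `x` gives
`∑_{x<2^n} a^{w(x)} (-1)^{z·x}`. For `a = i` each factor is `(1 + i)(-i)^{z_j}`, so the product is
`(1 + i)^{2m} (-i)^{w(z)} = (2i)^m (-i)^{w(z)}`.
-/

lemma hw_eq_mod_two_add_hw_div_two {x : ℕ} (hx : 0 < x) : hw x = x % 2 + hw (x / 2) := by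
  rw [hw, Nat.digits_def' (by norm_num) hx, List.sum_cons, hw]

lemma nbit_zero (x : ℕ) : nbit x 0 = x % 2 := by
  rcases Nat.mod_two_eq_zero_or_one x with h | h <;> simp [nbit, Nat.testBit_zero, h]

lemma nbit_succ (x j : ℕ) : nbit x (j + 1) = nbit (x / 2) j := by
  simp [nbit, Nat.testBit_add_one]

lemma nbit_of_lt_two_pow {n x : ℕ} (hx : x < 2 ^ n) : nbit x n = 0 := by
  simp [nbit, Nat.testBit_lt_two_pow hx]

lemma nbit_two_pow_add_of_lt {n x j : ℕ} (hj : j < n) : nbit (2 ^ n + x) j = nbit x j := by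
  simp [nbit, Nat.testBit_two_pow_add_gt hj]

lemma nbit_two_pow_add_self {n x : ℕ} (hx : x < 2 ^ n) : nbit (2 ^ n + x) n = 1 := by
  simp [nbit, Nat.testBit_two_pow_add_eq, Nat.testBit_lt_two_pow hx]

lemma hw_eq_sum_nbit {n x : ℕ} (hx : x < 2 ^ n) : hw x = ∑ j ∈ range n, nbit x j := by
  induction n generalizing x with
  | zero =>
    obtain rfl : x = 0 := by omega
    simp [hw]
  | succ n ih =>
    rw [sum_range_succ']
    simp only [nbit_succ, nbit_zero]
    rcases Nat.eq_zero_or_pos x with rfl | hpos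
    · simp [hw, nbit]
    · rw [hw_eq_mod_two_add_hw_div_two hpos, ih (by omega), add_comm]

lemma hw_two_pow_add {n x : ℕ} (hx : x < 2 ^ n) : hw (2 ^ n + x) = hw x + 1 := by
  rw [hw_eq_sum_nbit (n := n + 1) (by rw [pow_succ]; omega), sum_range_succ,
    nbit_two_pow_add_self hx, hw_eq_sum_nbit hx]
  congr 1
  exact sum_congr rfl fun j hj => nbit_two_pow_add_of_lt (mem_range.mp hj)

lemma ndot_succ_of_lt_two_pow {n z x : ℕ} (hx : x < 2 ^ n) : ndot (n + 1) z x = ndot n z x := by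
  rw [ndot, sum_range_succ, nbit_of_lt_two_pow hx, mul_zero, add_zero, ndot]

lemma ndot_succ_two_pow_add {n z x : ℕ} (hx : x < 2 ^ n) :
    ndot (n + 1) z (2 ^ n + x) = ndot n z x + nbit z n := by
  rw [ndot, sum_range_succ, nbit_two_pow_add_self hx, mul_one, ndot]
  congr 1
  exact sum_congr rfl fun j hj => by rw [nbit_two_pow_add_of_lt (mem_range.mp hj)]

lemma sum_pow_hw_mul_neg_one_pow_ndot {R : Type*} [CommRing R] (a : R) (n z : ℕ) :
    ∑ x ∈ range (2 ^ n), a ^ hw x * (-1) ^ ndot n z x =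
      ∏ j ∈ range n, (1 + a * (-1) ^ nbit z j) := by
  induction n with
  | zero => simp [hw, ndot]
  | succ n ih =>
    have lower : ∀ x ∈ range (2 ^ n), a ^ hw x * (-1) ^ ndot (n + 1) z x =
        a ^ hw x * (-1) ^ ndot n z x := fun x hx => by
      rw [ndot_succ_of_lt_two_pow (mem_range.mp hx)]
    have upper : ∀ x ∈ range (2 ^ n), a ^ hw (2 ^ n + x) * (-1) ^ ndot (n + 1) z (2 ^ n + x) =
        a ^ hw x * (-1) ^ ndot n z x * (a * (-1) ^ nbit z n) := fun x hx => by
      rw [hw_two_pow_add (mem_range.mp hx), ndot_succ_two_pow_add (mem_range.mp hx)]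
      ring
    rw [pow_succ, mul_two, sum_range_add, sum_congr rfl lower, sum_congr rfl upper, ← sum_mul, ih,
      prod_range_succ]
    ring

lemma one_add_I_mul_neg_one_pow_nbit (z j : ℕ) :
    1 + Complex.I * (-1) ^ nbit z j = (1 + Complex.I) * (-Complex.I) ^ nbit z j := by
  by_cases h : z.testBit j
  · simp only [nbit, h, if_true, pow_one]
    linear_combination Complex.I_sq
  · simp [nbit, h]

lemma one_add_I_sq : (1 + Complex.I) ^ 2 = 2 * Complex.I := by
  linear_combination Complex.I_sq

theorem stmt_2_general (m : ℕ) (z : ℕ) (hz : z < 2 ^ (2 * m)) :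
    ∑ x ∈ Finset.range (2 ^ (2 * m)), Complex.I ^ hw x * (-1) ^ ndot (2 * m) z x =
      (-1) ^ hw z * Complex.I ^ (m + hw z) * 2 ^ m := by
  calc ∑ x ∈ range (2 ^ (2 * m)), Complex.I ^ hw x * (-1) ^ ndot (2 * m) z x
      = ∏ j ∈ range (2 * m), (1 + Complex.I) * (-Complex.I) ^ nbit z j := by
        rw [sum_pow_hw_mul_neg_one_pow_ndot]
        exact prod_congr rfl fun j _ => one_add_I_mul_neg_one_pow_nbit z j
    _ = ((1 + Complex.I) ^ 2) ^ m * (-Complex.I) ^ hw z := by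
        rw [prod_mul_distrib, prod_const, prod_pow_eq_pow_sum, card_range, ← hw_eq_sum_nbit hz,
          pow_mul]
    _ = (-1) ^ hw z * Complex.I ^ (m + hw z) * 2 ^ m := by
        rw [one_add_I_sq, neg_pow, mul_pow, pow_add]
        ring

theorem stmt_2 (m : ℕ) (hm : 1 ≤ m) (z : ℕ) (hz : z < 2 ^ (2 * m)) :
    ∑ x ∈ Finset.range (2 ^ (2 * m)), Complex.I ^ hw x * (-1) ^ ndot (2 * m) z x =
      (-1) ^ hw z * Complex.I ^ (m + hw z) * 2 ^ m :=
  stmt_2_general m z hz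
end

section
/- Let m ∈ ℕ with m ≥ 1, let n = 2m, let H = (1/√2)·[[1,1],[1,-1]] and S = [[1,0],[0,i]]. Then for every z with 0 ≤ z < 2^n, the (z,0)-entry of H^{⊗n} S^{⊗n} H^{⊗n} equals (-1)^{w(z)} · i^{m+w(z)} / 2^m; in particular, in the superposition H^{⊗n} S^{⊗n} H^{⊗n} |0⟩^{⊗n} every basis state |z⟩ has amplitude of modulus 2^{-m} = 2^{-n/2}, and the amplitude depends on z only through w(z). -/
open Finset

/-- The single-qubit phase gate `S = [[1,0],[0,i]]`. -/
noncomputable def Sgate : Matrix (Fin 2) (Fin 2) ℂ := !![1, 0; 0, Complex.I]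

/-- The single-qubit Hadamard gate `H = (1/√2)·[[1,1],[1,-1]]`. -/
noncomputable def Hgate : Matrix (Fin 2) (Fin 2) ℂ :=
  ((Real.sqrt 2 : ℂ))⁻¹ • !![1, 1; 1, -1]

/-- The `n`-fold Kronecker power of a `2 × 2` complex matrix, a `2^n × 2^n` matrix whose
rows and columns are indexed by natural numbers `0 ≤ x < 2^n` via their binary
representations: the entry at `(x, y)` is `∏_{j=0}^{n-1} M (x_j) (y_j)`. -/
noncomputable def kronPow (n : ℕ) (M : Matrix (Fin 2) (Fin 2) ℂ) :
    Matrix (Fin (2 ^ n)) (Fin (2 ^ n)) ℂ :=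
  Matrix.of fun x y => ∏ j ∈ Finset.range n,
    M (if (x : ℕ).testBit j then 1 else 0) (if (y : ℕ).testBit j then 1 else 0)

/-! `M^{⊗n} N^{⊗n} = (M N)^{⊗n}`: summing a product of per-bit factors over all `x < 2^n`
factors into a product of per-bit sums. So the entry is `∏_j (HSH)_{z_j,0}` with
`HSH = ½[[1+i, 1-i], [1-i, 1+i]]`, i.e. `((1-i)/2)^{w(z)} ((1+i)/2)^{2m-w(z)}`, and since
`1 - i = -i(1 + i)` and `((1+i)/2)^2 = i/2` this is `(-i)^{w(z)} (i/2)^m`. -/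

lemma hw_eq_card_testBit {n z : ℕ} (hz : z < 2 ^ n) : hw z = #{j ∈ range n | z.testBit j} := by
  induction n generalizing z with
  | zero => simp_all [hw]
  | succ n ih =>
    rcases z.eq_zero_or_pos with rfl | hz0
    · simp [hw]
    have hw_succ : hw z = z % 2 + hw (z / 2) := by simp [hw, Nat.digits_def' one_lt_two hz0]
    rw [hw_succ, ih (by rw [pow_succ] at hz; omega), card_filter, card_filter, sum_range_succ']
    simp only [Nat.testBit_add_one, Nat.testBit_zero]
    rcases Nat.mod_two_eq_zero_or_one z with h | h <;> simp [h, add_comm]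

lemma hw_le {n z : ℕ} (hz : z < 2 ^ n) : hw z ≤ n :=
  hw_eq_card_testBit hz ▸ (card_filter_le _ _).trans (card_range n).le

lemma sum_range_two_pow_prod_testBit {R : Type*} [CommSemiring R] (n : ℕ) (f : ℕ → Bool → R) :
    ∑ x ∈ range (2 ^ n), ∏ j ∈ range n, f j (x.testBit j) =
      ∏ j ∈ range n, (f j false + f j true) := by
  induction n generalizing f with
  | zero => simp
  | succ n ih =>
    have low : ∀ x ∈ range (2 ^ n), ∏ j ∈ range (n + 1), f j (x.testBit j) =
        (∏ j ∈ range n, f j (x.testBit j)) * f n false := fun x hx => by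
      rw [prod_range_succ, Nat.testBit_eq_false_of_lt (mem_range.mp hx)]
    have high : ∀ x ∈ range (2 ^ n), ∏ j ∈ range (n + 1), f j ((2 ^ n + x).testBit j) =
        (∏ j ∈ range n, f j (x.testBit j)) * f n true := fun x hx => by
      rw [prod_range_succ, Nat.testBit_two_pow_add_eq, Nat.testBit_eq_false_of_lt (mem_range.mp hx)]
      congr 1
      exact prod_congr rfl fun j hj => by rw [Nat.testBit_two_pow_add_gt (mem_range.mp hj)]
    rw [pow_succ, mul_two, sum_range_add, sum_congr rfl low, sum_congr rfl high, ← sum_mul,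
      ← sum_mul, ih, prod_range_succ, mul_add]

lemma kronPow_mul (n : ℕ) (A B : Matrix (Fin 2) (Fin 2) ℂ) :
    kronPow n A * kronPow n B = kronPow n (A * B) := by
  ext x y
  set f : ℕ → Bool → ℂ := fun j b => A (if (x : ℕ).testBit j then 1 else 0) (if b then 1 else 0) *
    B (if b then 1 else 0) (if (y : ℕ).testBit j then 1 else 0)
  calc (kronPow n A * kronPow n B) x y
      = ∑ k ∈ range (2 ^ n), ∏ j ∈ range n, f j (k.testBit j) := by
        rw [Matrix.mul_apply, ← Fin.sum_univ_eq_sum_range]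
        simp only [kronPow, Matrix.of_apply, f, prod_mul_distrib]
    _ = ∏ j ∈ range n, (f j false + f j true) := sum_range_two_pow_prod_testBit n f
    _ = kronPow n (A * B) x y := by simp [kronPow, f, Matrix.mul_apply, Fin.sum_univ_two]

lemma kronPow_apply_zero (n : ℕ) (M : Matrix (Fin 2) (Fin 2) ℂ) (x : Fin (2 ^ n)) :
    kronPow n M x ⟨0, by positivity⟩ = M 1 0 ^ hw x * M 0 0 ^ (n - hw x) := by
  simp only [kronPow, Matrix.of_apply, Nat.zero_testBit, Bool.false_eq_true, if_false]
  rw [prod_congr rfl fun j _ => apply_ite (M · 0) _ _ _, prod_ite, prod_const, prod_const,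
    hw_eq_card_testBit x.isLt]
  have hcard := card_filter_add_card_filter_not (s := range n) (fun j => (x : ℕ).testBit j)
  rw [card_range] at hcard
  congr 2
  omega

lemma Hgate_mul_Sgate_mul_Hgate :
    Hgate * Sgate * Hgate = !![(1 + Complex.I) / 2, (1 - Complex.I) / 2;
      (1 - Complex.I) / 2, (1 + Complex.I) / 2] := by
  have hsqrt : ((Real.sqrt 2 : ℂ))⁻¹ * ((Real.sqrt 2 : ℂ))⁻¹ = 2⁻¹ := by
    rw [← mul_inv, ← Complex.ofReal_mul, Real.mul_self_sqrt zero_le_two]; norm_num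
  rw [Hgate, Matrix.smul_mul, Matrix.smul_mul, Matrix.mul_smul, smul_smul, hsqrt]
  ext i j
  fin_cases i <;> fin_cases j <;> simp [Sgate] <;> ring

open Complex in
lemma one_sub_I_div_two_pow_mul_one_add_I_div_two_pow {m w : ℕ} (hw : w ≤ 2 * m) :
    ((1 - I) / 2) ^ w * ((1 + I) / 2) ^ (2 * m - w) = (-1) ^ w * I ^ (m + w) / 2 ^ m := by
  have h_sub : (1 - I) / 2 = -I * ((1 + I) / 2) := by linear_combination (1 / 2 : ℂ) * I_mul_I
  have h_sq : ((1 + I) / 2) ^ 2 = I / 2 := by linear_combination (1 / 4 : ℂ) * I_mul_I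
  calc ((1 - I) / 2) ^ w * ((1 + I) / 2) ^ (2 * m - w)
      = (-I) ^ w * (((1 + I) / 2) ^ 2) ^ m := by
        rw [h_sub, mul_pow, mul_assoc, ← pow_add, Nat.add_sub_cancel' hw, pow_mul]
    _ = (-1) ^ w * I ^ (m + w) / 2 ^ m := by
        rw [h_sq, neg_pow, div_pow, pow_add]; ring

theorem stmt_8 (m : ℕ) (z : Fin (2 ^ (2 * m))) :
    (kronPow (2 * m) Hgate * kronPow (2 * m) Sgate * kronPow (2 * m) Hgate)
        z ⟨0, by positivity⟩ =
      (-1) ^ hw (z : ℕ) * Complex.I ^ (m + hw (z : ℕ)) / 2 ^ m ∧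
    ‖(kronPow (2 * m) Hgate * kronPow (2 * m) Sgate * kronPow (2 * m) Hgate)
          z ⟨0, by positivity⟩‖ = ((2 : ℝ) ^ m)⁻¹ := by
  have h_entry : (kronPow (2 * m) Hgate * kronPow (2 * m) Sgate * kronPow (2 * m) Hgate)
      z ⟨0, by positivity⟩ = (-1) ^ hw (z : ℕ) * Complex.I ^ (m + hw (z : ℕ)) / 2 ^ m := by
    rw [kronPow_mul, kronPow_mul, kronPow_apply_zero, Hgate_mul_Sgate_mul_Hgate]
    exact one_sub_I_div_two_pow_mul_one_add_I_div_two_pow (hw_le z.isLt)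
  refine ⟨h_entry, ?_⟩
  rw [h_entry]
  simp
end

section
/- Let m ∈ ℕ with m ≥ 1, let n = 2m, let y ∈ ℕ with 0 ≤ y < 2^n and y ≠ ȳ where ȳ = 2^n − 1 − y, and write w̄ = w(y). Then the sum b_y = Σ_{x=0, x∉{y,ȳ}}^{2^n-1} i^{w(x)} (-1)^{x·y}, taken in ℂ, satisfies: b_y = (-1)^{w̄} i^{m+w̄} 2^m − i^{w̄}(1+i^{2m}) if w̄ is even, and b_y = (-1)^{w̄} i^{m+w̄} 2^m + i^{w̄}(1+i^{2m}) if w̄ is odd. -/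
/-! The unrestricted sum factors over the bits: since `w(x) = Σ_j x_j`, it equals
`∏_j (1 + i (-1)^{y_j}) = (1 + i)^n (-i)^{w(y)}`, and `(1 + i)^{2m} = 2^m i^m`. The excluded terms
are `i^w (-1)^w` at `x = y` and `i^{n-w}` at `x = ȳ` (whose bits are disjoint from those of `y`);
since `i^{-w} = (-1)^w i^w`, both are multiples of `(-1)^w i^w`, and the sign `(-1)^w` produces the
two parity cases. -/

open Finset

lemma nbit_mul_self (x j : ℕ) : nbit x j * nbit x j = nbit x j := by
  unfold nbit; split <;> simp

lemma sum_range_two_pow_prod_nbit {R : Type*} [CommSemiring R] (f : ℕ → ℕ → R) (n : ℕ) :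
    ∑ x ∈ range (2 ^ n), ∏ j ∈ range n, f j (nbit x j) =
      ∏ j ∈ range n, (f j 0 + f j 1) := by
  induction n with
  | zero => simp
  | succ n ih =>
    have hlow : ∀ x ∈ range (2 ^ n), ∏ j ∈ range (n + 1), f j (nbit x j)
        = (∏ j ∈ range n, f j (nbit x j)) * f n 0 := fun x hx => by
      rw [prod_range_succ, nbit, Nat.testBit_lt_two_pow (mem_range.mp hx)]; rfl
    have hhigh : ∀ x ∈ range (2 ^ n), ∏ j ∈ range (n + 1), f j (nbit (2 ^ n + x) j)
        = (∏ j ∈ range n, f j (nbit x j)) * f n 1 := fun x hx => by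
      rw [prod_range_succ, nbit, Nat.testBit_two_pow_add_eq,
        Nat.testBit_lt_two_pow (mem_range.mp hx)]
      congr 1
      refine prod_congr rfl fun j hj => ?_
      rw [nbit, nbit, Nat.testBit_two_pow_add_gt (mem_range.mp hj)]
    rw [pow_succ, mul_two, sum_range_add, sum_congr rfl hlow, sum_congr rfl hhigh, ← sum_mul,
      ← sum_mul, ih, prod_range_succ, mul_add]

lemma sum_pow_hw_mul_pow_ndot {R : Type*} [CommSemiring R] (a b : R) (n y : ℕ) :
    ∑ x ∈ range (2 ^ n), a ^ hw x * b ^ ndot n x y =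
      ∏ j ∈ range n, (1 + a * b ^ nbit y j) := by
  have hfactor : ∀ x ∈ range (2 ^ n), a ^ hw x * b ^ ndot n x y
      = ∏ j ∈ range n, (a ^ nbit x j * b ^ (nbit x j * nbit y j)) := fun x hx => by
    rw [prod_mul_distrib, prod_pow_eq_pow_sum, prod_pow_eq_pow_sum, ndot,
      hw_eq_sum_nbit (mem_range.mp hx)]
  rw [sum_congr rfl hfactor, sum_range_two_pow_prod_nbit (fun j k => a ^ k * b ^ (k * nbit y j))]
  simp

lemma testBit_two_pow_sub_one_sub {n y j : ℕ} (hy : y < 2 ^ n) (hj : j < n) :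
    (2 ^ n - 1 - y).testBit j = !y.testBit j := by
  rw [Nat.sub_sub, add_comm, Nat.testBit_two_pow_sub_succ hy]
  simp [hj]

lemma nbit_two_pow_sub_one_sub_add {n y j : ℕ} (hy : y < 2 ^ n) (hj : j < n) :
    nbit (2 ^ n - 1 - y) j + nbit y j = 1 := by
  rw [nbit, nbit, testBit_two_pow_sub_one_sub hy hj]
  cases y.testBit j <;> rfl

lemma nbit_two_pow_sub_one_sub_mul {n y j : ℕ} (hy : y < 2 ^ n) (hj : j < n) :
    nbit (2 ^ n - 1 - y) j * nbit y j = 0 := by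
  rw [nbit, nbit, testBit_two_pow_sub_one_sub hy hj]
  cases y.testBit j <;> rfl

lemma hw_two_pow_sub_one_sub_add_hw {n y : ℕ} (hy : y < 2 ^ n) :
    hw (2 ^ n - 1 - y) + hw y = n := by
  rw [hw_eq_sum_nbit (by omega : 2 ^ n - 1 - y < 2 ^ n), hw_eq_sum_nbit hy, ← sum_add_distrib,
    sum_congr rfl fun j hj => nbit_two_pow_sub_one_sub_add hy (mem_range.mp hj)]
  simp

lemma ndot_two_pow_sub_one_sub {n y : ℕ} (hy : y < 2 ^ n) : ndot n (2 ^ n - 1 - y) y = 0 :=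
  sum_eq_zero fun _ hj => nbit_two_pow_sub_one_sub_mul hy (mem_range.mp hj)

lemma ndot_self {n y : ℕ} (hy : y < 2 ^ n) : ndot n y y = hw y := by
  simp only [ndot, nbit_mul_self, hw_eq_sum_nbit hy]

lemma prod_one_add_I_mul_neg_one_pow_nbit {n y : ℕ} (hy : y < 2 ^ n) :
    ∏ j ∈ range n, (1 + Complex.I * (-1) ^ nbit y j) =
      (1 + Complex.I) ^ n * (-Complex.I) ^ hw y := by
  have hfactor : ∀ j ∈ range n,
      1 + Complex.I * (-1) ^ nbit y j = (1 + Complex.I) * (-Complex.I) ^ nbit y j := fun j _ => by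
    unfold nbit
    split
    · linear_combination Complex.I_sq
    · simp
  rw [prod_congr rfl hfactor, prod_mul_distrib, prod_const, card_range, prod_pow_eq_pow_sum,
    hw_eq_sum_nbit hy]

lemma one_add_I_pow_mul_neg_I_pow_sub {m a w : ℕ} (h : a + w = 2 * m) :
    (1 + Complex.I) ^ (2 * m) * (-Complex.I) ^ w - (Complex.I ^ w * (-1) ^ w + Complex.I ^ a)
      = (-1) ^ w * Complex.I ^ (m + w) * 2 ^ m -
          (-1) ^ w * Complex.I ^ w * (1 + Complex.I ^ (2 * m)) := by
  have h1 : (1 + Complex.I) ^ (2 * m) = 2 ^ m * Complex.I ^ m := by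
    rw [pow_mul, ← mul_pow]; congr 1; linear_combination Complex.I_sq
  have h2 : Complex.I ^ w * Complex.I ^ w = (-1) ^ w := by
    rw [← mul_pow, Complex.I_mul_I]
  have h3 : ((-1) ^ w * (-1) ^ w : ℂ) = 1 := by
    rw [← mul_pow]; norm_num
  rw [h1, neg_pow, ← h, pow_add, pow_add]
  linear_combination (-1) ^ w * Complex.I ^ a * h2 + Complex.I ^ a * h3

theorem stmt_11_general (m : ℕ) (y : ℕ) (hy : y < 2 ^ (2 * m))
    (hne : y ≠ 2 ^ (2 * m) - 1 - y) :
    (Even (hw y) →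
      ∑ x ∈ (Finset.range (2 ^ (2 * m))).filter
          (fun x => x ≠ y ∧ x ≠ 2 ^ (2 * m) - 1 - y),
        Complex.I ^ hw x * (-1) ^ ndot (2 * m) x y =
      (-1) ^ hw y * Complex.I ^ (m + hw y) * 2 ^ m -
        Complex.I ^ hw y * (1 + Complex.I ^ (2 * m))) ∧
    (Odd (hw y) →
      ∑ x ∈ (Finset.range (2 ^ (2 * m))).filter
          (fun x => x ≠ y ∧ x ≠ 2 ^ (2 * m) - 1 - y),
        Complex.I ^ hw x * (-1) ^ ndot (2 * m) x y =
      (-1) ^ hw y * Complex.I ^ (m + hw y) * 2 ^ m +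
        Complex.I ^ hw y * (1 + Complex.I ^ (2 * m))) := by
  set Y := 2 ^ (2 * m) - 1 - y
  have hfilter : (range (2 ^ (2 * m))).filter (fun x => x ≠ y ∧ x ≠ Y)
      = range (2 ^ (2 * m)) \ {y, Y} := by
    ext x
    simp [not_or]
  have hpair : {y, Y} ⊆ range (2 ^ (2 * m)) :=
    insert_subset_iff.mpr
      ⟨mem_range.mpr hy, singleton_subset_iff.mpr (mem_range.mpr (by omega))⟩
  have hsum : ∑ x ∈ (range (2 ^ (2 * m))).filter (fun x => x ≠ y ∧ x ≠ Y),
      Complex.I ^ hw x * (-1) ^ ndot (2 * m) x y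
      = (1 + Complex.I) ^ (2 * m) * (-Complex.I) ^ hw y
        - (Complex.I ^ hw y * (-1) ^ hw y + Complex.I ^ hw Y) := by
    rw [hfilter, sum_sdiff_eq_sub hpair, sum_pair hne, sum_pow_hw_mul_pow_ndot,
      prod_one_add_I_mul_neg_one_pow_nbit hy, ndot_self hy, ndot_two_pow_sub_one_sub hy,
      pow_zero, mul_one]
  rw [hsum, one_add_I_pow_mul_neg_I_pow_sub (hw_two_pow_sub_one_sub_add_hw hy)]
  exact ⟨fun h => by rw [h.neg_one_pow]; ring, fun h => by rw [h.neg_one_pow]; ring⟩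

theorem stmt_11 (m : ℕ) (hm : 1 ≤ m) (y : ℕ) (hy : y < 2 ^ (2 * m))
    (hne : y ≠ 2 ^ (2 * m) - 1 - y) :
    (Even (hw y) →
      ∑ x ∈ (Finset.range (2 ^ (2 * m))).filter
          (fun x => x ≠ y ∧ x ≠ 2 ^ (2 * m) - 1 - y),
        Complex.I ^ hw x * (-1) ^ ndot (2 * m) x y =
      (-1) ^ hw y * Complex.I ^ (m + hw y) * 2 ^ m -
        Complex.I ^ hw y * (1 + Complex.I ^ (2 * m))) ∧
    (Odd (hw y) →
      ∑ x ∈ (Finset.range (2 ^ (2 * m))).filter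
          (fun x => x ≠ y ∧ x ≠ 2 ^ (2 * m) - 1 - y),
        Complex.I ^ hw x * (-1) ^ ndot (2 * m) x y =
      (-1) ^ hw y * Complex.I ^ (m + hw y) * 2 ^ m +
        Complex.I ^ hw y * (1 + Complex.I ^ (2 * m))) :=
  stmt_11_general m y hy hne
end
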